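/- Convergence of entropy under mollification: with h₀, U₀, and the mollifications h₀^ε, U₀^ε as above, lim_{ε→0} Λ(h₀^ε, U₀^ε) = Λ(h₀, U₀), provided Λ(h₀,U₀) < ∞. (The key points are Λ(h₀^ε,U₀^ε) ≤ Λ(h₀,U₀) combined with the weak-* convergence h₀^ε → h₀, U₀^ε → U₀ and lower semicontinuity of Λ.) -/

import Mathlib

open MeasureTheory
noncomputable section

/-- The 3-torus `𝕋³ = ℝ³/ℤ³`. -/
abbrev T3 : Type := UnitAddCircle × UnitAddCircle × UnitAddCircle

/-- Pairing of a signed (Borel) measure with a function, `∫ f ds`. -/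
def pairSM {α : Type*} [MeasurableSpace α] (s : SignedMeasure α) (f : α → ℝ) : ℝ :=
  ∫ x, f x ∂s.toJordanDecomposition.posPart - ∫ x, f x ∂s.toJordanDecomposition.negPart

/-- The entropy functional `Λ`, defined by duality from abstract pairings
`Ph : C(𝕋³,ℝ)' ` and `PU : C(𝕋³,ℝ⁴)'`:
`Λ = sup { ⟨Ph, a⟩ + ⟨PU, A⟩ : (a,A) continuous, a + |A|²/2 ≤ 0 }`. -/
def LamGen (Ph : (T3 → ℝ) → ℝ) (PU : Fin 4 → (T3 → ℝ) → ℝ) : EReal :=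
  sSup { r : EReal | ∃ (a : C(T3, ℝ)) (A : Fin 4 → C(T3, ℝ)),
    (∀ x, a x + (∑ i, (A i x)^2) / 2 ≤ 0) ∧
    r = ((Ph ⇑a + ∑ i, PU i ⇑(A i) : ℝ) : EReal) }

/-- `Λ(ρ,U)` for a (nonnegative) Borel measure `ρ` and an `ℝ⁴`-valued Borel
measure `U` (given componentwise as signed measures) on the 3-torus. -/
def Lam (ρ : Measure T3) (U : Fin 4 → SignedMeasure T3) : EReal :=
  LamGen (fun f => ∫ x, f x ∂ρ) (fun i f => pairSM (U i) f)



/-!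
Mollifying the measures is dual to mollifying the test pair: by Fubini,
`∫ f (ρ_ε ⋆ μ) = ∫ (ρ̌_ε ⋆ f) dμ`. Since `(a, A) ↦ a + |A|²/2` is convex, averaging an admissible
pair against the probability density `ρ_ε(· - y)` keeps it admissible (Jensen), so
`Λ(h₀^ε, U₀^ε) ≤ Λ(h₀, U₀)` for every `ε`. Conversely the value of each admissible pair at `ε`
tends to its value at `0` by weak-* convergence, so `Λ` is lower semicontinuous along `ε → 0⁺`.
-/

open Filter Topology

instance MeasureTheory.Measure.volume_prod_isAddRightInvariant {G H : Type*}
    [MeasureSpace G] [MeasureSpace H] [Add G] [Add H] [MeasurableAdd G] [MeasurableAdd H]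
    [SFinite (volume : Measure G)] [SFinite (volume : Measure H)]
    [(volume : Measure G).IsAddRightInvariant]
    [(volume : Measure H).IsAddRightInvariant] :
    (volume : Measure (G × H)).IsAddRightInvariant :=
  Measure.prod.instIsAddRightInvariant

/-- Instance search does not find this through the nested product `𝕋 × (𝕋 × 𝕋)`. -/
instance : (volume : Measure T3).IsAddRightInvariant := Measure.volume_prod_isAddRightInvariant

theorem sq_integral_mul_le_integral_sq_mul {α : Type*} [MeasurableSpace α] {μ : Measure α}
    {g w : α → ℝ} (hw : 0 ≤ w) (hw1 : ∫ x, w x ∂μ = 1)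
    (hgw : Integrable (fun x => g x * w x) μ) (hg2w : Integrable (fun x => g x ^ 2 * w x) μ) :
    (∫ x, g x * w x ∂μ) ^ 2 ≤ ∫ x, g x ^ 2 * w x ∂μ := by
  set m := ∫ x, g x * w x ∂μ
  have hw_int : Integrable w μ := .of_integral_ne_zero (by simp [hw1])
  have hvar : 0 ≤ ∫ x, (g x - m) ^ 2 * w x ∂μ :=
    integral_nonneg fun x => mul_nonneg (sq_nonneg _) (hw x)
  have hexpand : ∫ x, (g x - m) ^ 2 * w x ∂μ = (∫ x, g x ^ 2 * w x ∂μ) - m ^ 2 := by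
    have hpt : ∀ x, (g x - m) ^ 2 * w x = g x ^ 2 * w x - 2 * m * (g x * w x) + m ^ 2 * w x :=
      fun x => by ring
    simp_rw [hpt]
    rw [integral_add (f := fun x => g x ^ 2 * w x - 2 * m * (g x * w x))
        (hg2w.sub (hgw.const_mul _)) (hw_int.const_mul _),
      integral_sub hg2w (hgw.const_mul _), integral_const_mul, integral_const_mul, hw1]
    ring
  linarith

section Mollify

variable {G : Type*} [TopologicalSpace G] [CompactSpace G] [MeasurableSpace G] [BorelSpace G]

theorem Continuous.integrable_of_compactSpace {f : G → ℝ} (hf : Continuous f) (μ : Measure G)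
    [IsFiniteMeasure μ] : Integrable f μ :=
  hf.integrable_of_hasCompactSupport (.of_compactSpace f)

theorem continuous_integral_of_continuous_uncurry {X : Type*} [TopologicalSpace X]
    [FirstCountableTopology X] [LocallyCompactSpace X] (μ : Measure G) [IsFiniteMeasure μ]
    {f : X → G → ℝ} (hf : Continuous (Function.uncurry f)) :
    Continuous fun x => ∫ y, f x y ∂μ := by
  simpa only [Measure.restrict_univ] using
    continuous_parametric_integral_of_continuous hf isCompact_univ

variable [SecondCountableTopology G] [AddGroup G] [IsTopologicalAddGroup G]
  (μ : Measure G) [IsFiniteMeasure μ]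

/-- The transpose of the mollification `ν ↦ ρ ⋆ ν` of measures. -/
def mollify (ρ f : C(G, ℝ)) : C(G, ℝ) where
  toFun y := ∫ x, f x * ρ (x - y) ∂μ
  continuous_toFun :=
    continuous_integral_of_continuous_uncurry μ (f := fun y x => f x * ρ (x - y)) (by fun_prop)

theorem integral_mollify (ρ f : C(G, ℝ)) (ν : Measure G) [IsFiniteMeasure ν] :
    ∫ y, mollify μ ρ f y ∂ν = ∫ x, f x * ∫ y, ρ (x - y) ∂ν ∂μ := by
  have hint : Integrable (Function.uncurry fun x y => f x * ρ (x - y)) (μ.prod ν) :=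
    Continuous.integrable_of_compactSpace (by fun_prop) _
  simp_rw [← integral_const_mul]
  exact (integral_integral_swap hint).symm

theorem pairSM_mollify (ρ f : C(G, ℝ)) (s : SignedMeasure G) :
    pairSM s (mollify μ ρ f) = ∫ x, f x * pairSM s (fun y => ρ (x - y)) ∂μ := by
  have hcont (ν : Measure G) [IsFiniteMeasure ν] : Continuous fun x => f x * ∫ y, ρ (x - y) ∂ν :=
    f.continuous.mul (continuous_integral_of_continuous_uncurry ν (by fun_prop))
  simp_rw [pairSM, mul_sub]
  rw [integral_sub ((hcont _).integrable_of_compactSpace μ)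
    ((hcont _).integrable_of_compactSpace μ), integral_mollify, integral_mollify]

/-- A pair `(a, A)` in the constraint set of the dual formula for `Λ`. -/
def IsAdmissible {X ι : Type*} [TopologicalSpace X] [Fintype ι] (a : C(X, ℝ))
    (A : ι → C(X, ℝ)) : Prop :=
  ∀ x, a x + (∑ i, A i x ^ 2) / 2 ≤ 0

theorem isAdmissible_mollify [μ.IsAddRightInvariant] {ι : Type*} [Fintype ι] {ρ : C(G, ℝ)}
    (hρ : ∀ x, 0 ≤ ρ x) (hρ1 : ∫ x, ρ x ∂μ = 1) {a : C(G, ℝ)} {A : ι → C(G, ℝ)}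
    (h : IsAdmissible a A) : IsAdmissible (mollify μ ρ a) (fun i => mollify μ ρ (A i)) := by
  intro y
  set w : G → ℝ := fun x => ρ (x - y)
  have hw1 : ∫ x, w x ∂μ = 1 := (integral_sub_right_eq_self (fun x => ρ x) y).trans hρ1
  have hint {g : G → ℝ} (hg : Continuous g) : Integrable (fun x => g x * w x) μ :=
    (hg.mul (by fun_prop)).integrable_of_compactSpace μ
  calc ∫ x, a x * w x ∂μ + (∑ i, (∫ x, A i x * w x ∂μ) ^ 2) / 2
      ≤ ∫ x, a x * w x ∂μ + (∑ i, ∫ x, A i x ^ 2 * w x ∂μ) / 2 := by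
        gcongr with i _
        exact sq_integral_mul_le_integral_sq_mul (fun x => hρ _) hw1
          (hint (A i).continuous) (hint (by fun_prop))
    _ = ∫ x, (a x + (∑ i, A i x ^ 2) / 2) * w x ∂μ := by
        simp_rw [add_mul, div_mul_eq_mul_div, Finset.sum_mul]
        rw [integral_add (hint a.continuous) ((integrable_finsetSum _ fun i _ =>
            hint (by fun_prop)).div_const _), integral_div,
          integral_finsetSum _ fun i _ => hint (by fun_prop)]
    _ ≤ 0 := integral_nonpos fun x => mul_nonpos_of_nonpos_of_nonneg (h x) (hρ _)

end Mollify

theorem coe_le_LamGen {Ph : (T3 → ℝ) → ℝ} {PU : Fin 4 → (T3 → ℝ) → ℝ} {a : C(T3, ℝ)}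
    {A : Fin 4 → C(T3, ℝ)} (h : IsAdmissible a A) :
    ((Ph a + ∑ i, PU i (A i) : ℝ) : EReal) ≤ LamGen Ph PU :=
  le_sSup ⟨a, A, h, rfl⟩

theorem LamGen_le_of_eq_comp {Ph Ph' : (T3 → ℝ) → ℝ} {PU PU' : Fin 4 → (T3 → ℝ) → ℝ}
    (T : C(T3, ℝ) → C(T3, ℝ))
    (hT : ∀ a (A : Fin 4 → C(T3, ℝ)), IsAdmissible a A → IsAdmissible (T a) (fun i => T (A i)))
    (hPh : ∀ f : C(T3, ℝ), Ph f = Ph' (T f))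
    (hPU : ∀ i (f : C(T3, ℝ)), PU i f = PU' i (T f)) :
    LamGen Ph PU ≤ LamGen Ph' PU' := by
  refine sSup_le ?_
  rintro _ ⟨a, A, h, rfl⟩
  simpa only [hPh, hPU] using coe_le_LamGen (Ph := Ph') (PU := PU') (hT a A h)

theorem eventually_lt_LamGen_of_tendsto {ι : Type*} {l : Filter ι} {Ph : (T3 → ℝ) → ℝ}
    {PU : Fin 4 → (T3 → ℝ) → ℝ} {Phε : ι → (T3 → ℝ) → ℝ} {PUε : ι → Fin 4 → (T3 → ℝ) → ℝ}
    (hPh : ∀ f : C(T3, ℝ), Tendsto (fun ε => Phε ε f) l (𝓝 (Ph f)))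
    (hPU : ∀ i (f : C(T3, ℝ)), Tendsto (fun ε => PUε ε i f) l (𝓝 (PU i f)))
    {b : EReal} (hb : b < LamGen Ph PU) : ∀ᶠ ε in l, b < LamGen (Phε ε) (PUε ε) := by
  obtain ⟨_, ⟨a, A, h, rfl⟩, hbr⟩ := lt_sSup_iff.mp hb
  have hval : Tendsto (fun ε => ((Phε ε a + ∑ i, PUε ε i (A i) : ℝ) : EReal)) l
      (𝓝 ((Ph a + ∑ i, PU i (A i) : ℝ) : EReal)) :=
    (continuous_coe_real_ereal.tendsto _).comp
      ((hPh a).add (tendsto_finsetSum _ fun i _ => hPU i (A i)))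
  filter_upwards [hval.eventually (eventually_gt_nhds hbr)] with ε hε
  exact hε.trans_le (coe_le_LamGen h)

theorem lam_mollify_tendsto_general (h0 : Measure T3) [IsFiniteMeasure h0]
    (U0 : Fin 4 → SignedMeasure T3)
    (ρK : ℝ → C(T3, ℝ))
    (hpos : ∀ ε ∈ Set.Ioo (0:ℝ) 1, ∀ x, 0 < ρK ε x)
    (hmass : ∀ ε ∈ Set.Ioo (0:ℝ) 1, ∫ x, ρK ε x = 1)
    (hconvh : ∀ f : C(T3, ℝ),
      Filter.Tendsto (fun ε => ∫ x, f x * (∫ y, ρK ε (x - y) ∂h0))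
        (nhdsWithin 0 (Set.Ioi 0)) (nhds (∫ x, f x ∂h0)))
    (hconvU : ∀ (i : Fin 4) (f : C(T3, ℝ)),
      Filter.Tendsto (fun ε => ∫ x, f x * pairSM (U0 i) (fun y => ρK ε (x - y)))
        (nhdsWithin 0 (Set.Ioi 0)) (nhds (pairSM (U0 i) ⇑f))) :
    Filter.Tendsto
      (fun ε => LamGen (fun f => ∫ x, f x * (∫ y, ρK ε (x - y) ∂h0))
        (fun i f => ∫ x, f x * pairSM (U0 i) (fun y => ρK ε (x - y))))
      (nhdsWithin 0 (Set.Ioi 0)) (nhds (Lam h0 U0)) := by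
  refine tendsto_order.2 ⟨fun b hb => eventually_lt_LamGen_of_tendsto hconvh hconvU hb,
    fun b hb => ?_⟩
  filter_upwards [Ioo_mem_nhdsGT one_pos] with ε hε
  refine lt_of_le_of_lt (LamGen_le_of_eq_comp (mollify volume (ρK ε))
    (fun a A h => isAdmissible_mollify volume (fun x => (hpos ε hε x).le) (hmass ε hε) h)
    (fun f => (integral_mollify volume (ρK ε) f h0).symm)
    (fun i f => (pairSM_mollify volume (ρK ε) f (U0 i)).symm)) hb

/-- convergence of the entropy under mollification:
`Λ(h₀^ε, U₀^ε) → Λ(h₀,U₀)` as `ε → 0⁺`, provided `Λ(h₀,U₀) < ∞`.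
Here `ρK ε` is, for each `ε ∈ (0,1)`, a positive probability kernel on `𝕋³`
(e.g. the periodized Gaussian), and the mollified measures are assumed to
converge weakly-* to `(h₀,U₀)` as `ε → 0⁺` (which holds for the periodized
Gaussian mollifier). -/
theorem lam_mollify_tendsto (h0 : Measure T3) [IsFiniteMeasure h0]
    (U0 : Fin 4 → SignedMeasure T3)
    (ρK : ℝ → C(T3, ℝ))
    (hpos : ∀ ε ∈ Set.Ioo (0:ℝ) 1, ∀ x, 0 < ρK ε x)
    (hmass : ∀ ε ∈ Set.Ioo (0:ℝ) 1, ∫ x, ρK ε x = 1)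
    (hconvh : ∀ f : C(T3, ℝ),
      Filter.Tendsto (fun ε => ∫ x, f x * (∫ y, ρK ε (x - y) ∂h0))
        (nhdsWithin 0 (Set.Ioi 0)) (nhds (∫ x, f x ∂h0)))
    (hconvU : ∀ (i : Fin 4) (f : C(T3, ℝ)),
      Filter.Tendsto (fun ε => ∫ x, f x * pairSM (U0 i) (fun y => ρK ε (x - y)))
        (nhdsWithin 0 (Set.Ioi 0)) (nhds (pairSM (U0 i) ⇑f)))
    (hfin : Lam h0 U0 ≠ (⊤ : EReal)) :
    Filter.Tendsto
      (fun ε => LamGen (fun f => ∫ x, f x * (∫ y, ρK ε (x - y) ∂h0))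
        (fun i f => ∫ x, f x * pairSM (U0 i) (fun y => ρK ε (x - y))))
      (nhdsWithin 0 (Set.Ioi 0)) (nhds (Lam h0 U0)) :=
  lam_mollify_tendsto_general h0 U0 ρK hpos hmass hconvh hconvU
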